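/- arXiv:2412.06930 — 6 statements merged into one kernel-verified Lean document; each statement's English description precedes it below -/
import Mathlib

section
/- Let d_1, ..., d_n be nonnegative integers, set d_0 = d_{n+1} = 0, and for 1 ≤ i ≤ j ≤ n define m_{ij} = max(min{ min(d_k - d_{i-1}, d_k - d_{j+1}) : i ≤ k ≤ j }, 0). Then for every vertex l with 1 ≤ l ≤ n, the sum of m_{ij} over all intervals [i,j] containing l equals d_l. -/
/-!
Slice the graph of `d` horizontally. For each height `1 ≤ h ≤ d l`, the vertices around `l` with
`d ≥ h` form a unique interval `[i, j] ∋ l` whose outer neighbours lie below `h` (they exist since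
`d₀ = d_{n+1} = 0`). Conversely `[i, j]` arises at exactly the heights
`max (d_{i-1}) (d_{j+1}) < h ≤ min_{i ≤ k ≤ j} d_k`, and there are `m_{ij}` of them. So the sum of
the `m_{ij}` counts the heights `1, …, d l`.
-/

open Finset

/-- `[i, j]` is a maximal interval on which `d ≥ h` (for `i ≥ 1`; `i - 1` truncates at `0`). -/
def IsLevelInterval (d : ℕ → ℤ) (h : ℤ) (i j : ℕ) : Prop :=
  d (i - 1) < h ∧ d (j + 1) < h ∧ ∀ k ∈ Icc i j, h ≤ d k

instance (d : ℕ → ℤ) (h : ℤ) (i j : ℕ) : Decidable (IsLevelInterval d h i j) :=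
  inferInstanceAs (Decidable (_ ∧ _ ∧ _))

namespace IsLevelInterval

variable {d : ℕ → ℤ} {h : ℤ} {i j i' j' : ℕ}

theorem le_left (hp : IsLevelInterval d h i j) (hq : IsLevelInterval d h i' j')
    (hi' : i' ≤ j + 1) : i' ≤ i := by
  by_contra! hlt
  exact (hq.1.trans_le (hp.2.2 (i' - 1) (mem_Icc.2 ⟨by omega, by omega⟩))).false

theorem le_right (hp : IsLevelInterval d h i j) (hq : IsLevelInterval d h i' j')
    (hj' : i ≤ j' + 1) : j ≤ j' := by
  by_contra! hlt
  exact (hq.2.1.trans_le (hp.2.2 (j' + 1) (mem_Icc.2 ⟨hj', hlt⟩))).false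

end IsLevelInterval

theorem exists_left_end {d : ℕ → ℤ} {h : ℤ} {l : ℕ} (h0 : d 0 < h) (hl : h ≤ d l) :
    ∃ i, 1 ≤ i ∧ i ≤ l ∧ d (i - 1) < h ∧ ∀ k ∈ Icc i l, h ≤ d k := by
  set a := Nat.findGreatest (fun k => d k < h) l
  have ha : d a < h := Nat.findGreatest_spec (P := fun k => d k < h) (Nat.zero_le l) h0
  have hal : a < l := lt_of_le_of_ne (Nat.findGreatest_le l) fun hal => by
    rw [hal] at ha; exact ha.not_ge hl
  refine ⟨a + 1, by omega, hal, ha, fun k hk => ?_⟩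
  rw [mem_Icc] at hk
  exact not_lt.1 (Nat.findGreatest_is_greatest (P := fun k => d k < h) (by omega) hk.2)

theorem exists_right_end {d : ℕ → ℤ} {h : ℤ} {l m : ℕ} (hm : d m < h) (hlm : l < m)
    (hl : h ≤ d l) :
    ∃ j, l ≤ j ∧ j < m ∧ d (j + 1) < h ∧ ∀ k ∈ Icc l j, h ≤ d k := by
  have hex : ∃ b, l < b ∧ d b < h := ⟨m, hlm, hm⟩
  obtain ⟨hlb, hb⟩ := Nat.find_spec hex
  refine ⟨Nat.find hex - 1, by omega, by have := Nat.find_min' hex ⟨hlm, hm⟩; omega,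
    by rwa [Nat.sub_add_cancel (by omega)], fun k hk => ?_⟩
  rw [mem_Icc] at hk
  rcases hk.1.eq_or_lt with rfl | hlk
  · exact hl
  · exact not_lt.1 fun hk' => Nat.find_min hex (by omega) ⟨hlk, hk'⟩

theorem existsUnique_isLevelInterval {d : ℕ → ℤ} {h : ℤ} {n l : ℕ} (h0 : d 0 < h)
    (hn : d (n + 1) < h) (hl : h ≤ d l) (hln : l ≤ n) :
    ∃! p, p ∈ Icc 1 l ×ˢ Icc l n ∧ IsLevelInterval d h p.1 p.2 := by
  obtain ⟨i, hi1, hil, hi, hleft⟩ := exists_left_end h0 hl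
  obtain ⟨j, hlj, hjn, hj, hright⟩ := exists_right_end hn (Nat.lt_succ_of_le hln) hl
  have hij : IsLevelInterval d h i j := ⟨hi, hj, fun k hk => by
    rcases le_total k l with hkl | hlk
    · exact hleft k (mem_Icc.2 ⟨(mem_Icc.1 hk).1, hkl⟩)
    · exact hright k (mem_Icc.2 ⟨hlk, (mem_Icc.1 hk).2⟩)⟩
  refine ⟨(i, j), ⟨mem_product.2 ⟨mem_Icc.2 ⟨hi1, hil⟩, mem_Icc.2 ⟨hlj, by omega⟩⟩, hij⟩, ?_⟩
  rintro ⟨i', j'⟩ ⟨hp, hq⟩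
  simp only [mem_product, mem_Icc] at hp
  have := hij.le_left hq (by omega)
  have := hq.le_left hij (by omega)
  have := hij.le_right hq (by omega)
  have := hq.le_right hij (by omega)
  ext <;> dsimp only <;> omega

theorem sum_card_filter_eq_card_of_existsUnique {α β : Type*} {s : Finset α} {t : Finset β}
    {r : α → β → Prop} [∀ a b, Decidable (r a b)] (hr : ∀ a ∈ s, ∃! b, b ∈ t ∧ r a b) :
    ∑ b ∈ t, #{a ∈ s | r a b} = #s := by
  calc ∑ b ∈ t, #{a ∈ s | r a b} = ∑ a ∈ s, #{b ∈ t | r a b} :=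
        (sum_card_bipartiteAbove_eq_sum_card_bipartiteBelow ..).symm
    _ = ∑ a ∈ s, 1 := sum_congr rfl fun a ha =>
        card_eq_one_iff_existsUnique.2 (by simpa only [mem_filter] using hr a ha)
    _ = #s := (card_eq_sum_ones s).symm

theorem sInf_min_sub_eq_inf'_sub (d : ℕ → ℤ) (a b : ℤ) {i j : ℕ} (hij : (Icc i j).Nonempty) :
    sInf {x : ℤ | ∃ k, i ≤ k ∧ k ≤ j ∧ x = min (d k - a) (d k - b)} =
      (Icc i j).inf' hij d - max a b := by
  refine IsLeast.csInf_eq ⟨?_, ?_⟩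
  · obtain ⟨k, hk, hkd⟩ := exists_mem_eq_inf' hij d
    rw [mem_Icc] at hk
    exact ⟨k, hk.1, hk.2, by rw [hkd, min_sub_sub_left]⟩
  · rintro x ⟨k, hik, hkj, rfl⟩
    rw [min_sub_sub_left]
    exact sub_le_sub_right (inf'_le d (mem_Icc.2 ⟨hik, hkj⟩)) _

theorem filter_isLevelInterval_eq_Icc {d : ℕ → ℤ} {i j l : ℕ} (hl : l ∈ Icc i j)
    (hpos : 0 ≤ d (i - 1)) :
    {h ∈ Icc 1 (d l) | IsLevelInterval d h i j} =
      Icc (max (d (i - 1)) (d (j + 1)) + 1) ((Icc i j).inf' ⟨l, hl⟩ d) := by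
  have hdl : (Icc i j).inf' ⟨l, hl⟩ d ≤ d l := inf'_le d hl
  ext h
  rw [mem_filter, mem_Icc, mem_Icc, IsLevelInterval, Int.add_one_le_iff, max_lt_iff]
  constructor
  · rintro ⟨-, hi, hj, hk⟩
    exact ⟨⟨hi, hj⟩, le_inf' _ _ hk⟩
  · rintro ⟨⟨hi, hj⟩, hM⟩
    exact ⟨⟨by omega, hM.trans hdl⟩, hi, hj, fun k hk => hM.trans (inf'_le d hk)⟩

theorem max_sInf_min_sub_zero_eq_card {d : ℕ → ℤ} {i j l : ℕ} (hl : l ∈ Icc i j)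
    (hpos : 0 ≤ d (i - 1)) :
    max (sInf {x : ℤ | ∃ k, i ≤ k ∧ k ≤ j ∧ x = min (d k - d (i - 1)) (d k - d (j + 1))}) 0 =
      #{h ∈ Icc 1 (d l) | IsLevelInterval d h i j} := by
  rw [sInf_min_sub_eq_inf'_sub d _ _ ⟨l, hl⟩, filter_isLevelInterval_eq_Icc hl hpos,
    Int.card_Icc, add_sub_add_right_eq_sub, Int.toNat_eq_max]

theorem sum_multiplicities_eq_dim_general (n : ℕ) (d : ℕ → ℤ)
    (hpos : ∀ i, 0 ≤ d i) (h0 : d 0 = 0) (hn : d (n + 1) = 0)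
    (l : ℕ) (hln : l ≤ n) :
    ∑ p ∈ Finset.Icc 1 l ×ˢ Finset.Icc l n,
      max (sInf {x : ℤ | ∃ k, p.1 ≤ k ∧ k ≤ p.2 ∧
        x = min (d k - d (p.1 - 1)) (d k - d (p.2 + 1))}) 0 = d l := by
  have hunique : ∀ h ∈ Icc 1 (d l),
      ∃! p, p ∈ Icc 1 l ×ˢ Icc l n ∧ IsLevelInterval d h p.1 p.2 := fun h hh => by
    rw [mem_Icc] at hh
    exact existsUnique_isLevelInterval (by omega) (by omega) hh.2 hln
  calc _ = ∑ p ∈ Icc 1 l ×ˢ Icc l n, (#{h ∈ Icc 1 (d l) | IsLevelInterval d h p.1 p.2} : ℤ) :=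
        sum_congr rfl fun p hp => by
          simp only [mem_product, mem_Icc] at hp
          exact max_sInf_min_sub_zero_eq_card (mem_Icc.2 ⟨hp.1.2, hp.2.1⟩) (hpos _)
    _ = d l := by
      rw [← Nat.cast_sum, sum_card_filter_eq_card_of_existsUnique hunique, Int.card_Icc,
        add_sub_cancel_right, Int.toNat_of_nonneg (hpos l)]

/-- Dimension-vector consistency of the piecewise-linear multiplicity formula for the
equioriented type `Aₙ` quiver `1 → 2 → ⋯ → n`: with `d₀ = d_{n+1} = 0` and
`m_{ij} = [min { min (d_k - d_{i-1}) (d_k - d_{j+1}) : i ≤ k ≤ j }]₊`,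
summing `m_{ij}` over all intervals `[i, j] ⊆ [1, n]` containing a vertex `l` gives `d_l`. -/
theorem sum_multiplicities_eq_dim (n : ℕ) (d : ℕ → ℤ)
    (hpos : ∀ i, 0 ≤ d i) (h0 : d 0 = 0) (hn : d (n + 1) = 0)
    (l : ℕ) (hl1 : 1 ≤ l) (hln : l ≤ n) :
    ∑ p ∈ Finset.Icc 1 l ×ˢ Finset.Icc l n,
      max (sInf {x : ℤ | ∃ k, p.1 ≤ k ∧ k ≤ p.2 ∧
        x = min (d k - d (p.1 - 1)) (d k - d (p.2 + 1))}) 0 = d l :=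
  sum_multiplicities_eq_dim_general n d hpos h0 hn l hln
end

section
/- Given nonnegative integers d_1, ..., d_n, there exists a chain of linear maps V_1 →^{f_1} V_2 → ⋯ →^{f_{n-1}} V_n of K-vector spaces with dim V_i = d_i such that for all 1 ≤ i ≤ j ≤ n the rank of f_{j-1} ∘ ⋯ ∘ f_i equals min{d_i, ..., d_j}. -/
namespace ChainRankAux

variable (K : Type*) [Field K]

/-- The "truncation" map `K^a → K^b` keeping the first `m` coordinates. -/
def tr (m a b : ℕ) : (Fin a → K) →ₗ[K] (Fin b → K) where
  toFun x k := if h : (k : ℕ) < m ∧ (k : ℕ) < a then x ⟨k, h.2⟩ else 0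
  map_add' x y := by
    funext k
    by_cases h : (k : ℕ) < m ∧ (k : ℕ) < a <;> simp [h]
  map_smul' c x := by
    funext k
    by_cases h : (k : ℕ) < m ∧ (k : ℕ) < a <;> simp [h]

@[simp] lemma tr_apply (m a b : ℕ) (x : Fin a → K) (k : Fin b) :
    tr K m a b x k = if h : (k : ℕ) < m ∧ (k : ℕ) < a then x ⟨k, h.2⟩ else 0 := rfl

lemma tr_factor (m a b : ℕ) :
    tr K m a b = (tr K m m b).comp (tr K a a m) := by
  ext x k
  simp only [LinearMap.comp_apply, tr_apply]
  by_cases h1 : (k : ℕ) < m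
  · by_cases h2 : (k : ℕ) < a <;> simp [h1, h2]
  · simp [h1]

lemma tr_surj (m a : ℕ) (h : m ≤ a) : Function.Surjective (tr K a a m) := by
  intro y
  refine ⟨fun k => if hk : (k : ℕ) < m then y ⟨k, hk⟩ else 0, ?_⟩
  funext t
  have ht : (t : ℕ) < a := lt_of_lt_of_le t.2 h
  simp [ht, t.2]

lemma tr_inj (m b : ℕ) (h : m ≤ b) : Function.Injective (tr K m m b) := by
  rw [← LinearMap.ker_eq_bot, LinearMap.ker_eq_bot']
  intro x hx
  funext t
  have ht : (t : ℕ) < b := lt_of_lt_of_le t.2 h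
  have := congrFun hx ⟨t, ht⟩
  simpa [t.2] using this

lemma rank_tr (m a b : ℕ) (hma : m ≤ a) (hmb : m ≤ b) :
    Module.finrank K (LinearMap.range (tr K m a b)) = m := by
  rw [tr_factor, LinearMap.range_comp, LinearMap.range_eq_top.mpr (tr_surj K m a hma),
    Submodule.map_top]
  rw [LinearMap.finrank_range_of_inj (tr_inj K m b hmb)]
  simp

end ChainRankAux

open ChainRankAux in
/-- Given nonnegative integers `d₁, …, dₙ`, there is a chain of linear maps
`V₁ →f₁ V₂ → ⋯ → Vₙ` with `dim V_i = d_i` whose composite ranks all attain the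
theoretical maximum: `rank (f_{j-1} ∘ ⋯ ∘ f_i) = min {d_i, …, d_j}` for all `1 ≤ i ≤ j ≤ n`.
The composites are encoded by a family `g` with `g i i = id`, `g i (j+1) = f j ∘ g i j`. -/
theorem exists_chain_rank_eq_min (K : Type*) [Field K] (n : ℕ) (d : ℕ → ℕ) :
    ∃ (f : ∀ i : ℕ, (Fin (d i) → K) →ₗ[K] (Fin (d (i + 1)) → K))
      (g : ∀ i j : ℕ, (Fin (d i) → K) →ₗ[K] (Fin (d j) → K)),
      (∀ i, g i i = LinearMap.id) ∧
      (∀ i j, i ≤ j → g i (j + 1) = (f j).comp (g i j)) ∧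
      (∀ i j (_ : 1 ≤ i) (hij : i ≤ j) (_ : j ≤ n),
        Module.finrank K (LinearMap.range (g i j)) =
          (Finset.Icc i j).inf' (Finset.nonempty_Icc.mpr hij) d) := by
  classical
  set M : ℕ → ℕ → ℕ := fun i j =>
    if h : i ≤ j then (Finset.Icc i j).inf' (Finset.nonempty_Icc.mpr h) d else d i with hM
  have hMle : ∀ i j, i ≤ j → ∀ k, i ≤ k → k ≤ j → M i j ≤ d k := by
    intro i j hij k hik hkj
    simp only [hM, dif_pos hij]
    exact Finset.inf'_le d (Finset.mem_Icc.mpr ⟨hik, hkj⟩)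
  have hMself : ∀ i, M i i = d i := by
    intro i
    simp [hM, Finset.Icc_self]
  have hMsucc : ∀ i j, i ≤ j → M i (j + 1) = min (M i j) (d (j + 1)) := by
    intro i j hij
    have h1 : i ≤ j + 1 := le_trans hij (Nat.le_succ j)
    simp only [hM, dif_pos hij, dif_pos h1]
    rw [Finset.inf'_congr _ (Finset.insert_Icc_right_eq_Icc_add_one h1).symm (fun _ _ => rfl),
      Finset.inf'_insert]
    exact min_comm _ _
  refine ⟨fun i => tr K (d i) (d i) (d (i + 1)), fun i j => tr K (M i j) (d i) (d j),
    ?_, ?_, ?_⟩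
  · intro i
    ext x k
    simp [hMself i, k.2]
  · intro i j hij
    ext x k
    have hMdj : M i j ≤ d j := hMle i j hij j hij le_rfl
    simp only [LinearMap.comp_apply, tr_apply, hMsucc i j hij]
    by_cases h1 : (k : ℕ) < M i j
    · have h2 : (k : ℕ) < d j := lt_of_lt_of_le h1 hMdj
      by_cases h3 : (k : ℕ) < d i <;> simp [h1, h2, h3, k.2]
    · have h4 : ¬ ((k : ℕ) < min (M i j) (d (j + 1))) := by
        simp only [lt_min_iff, not_and_or]; exact Or.inl h1
      by_cases h2 : (k : ℕ) < d j <;> simp [h1, h2, h4]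
  · intro i j _ hij _
    rw [rank_tr K (M i j) (d i) (d j) (hMle i j hij i le_rfl hij) (hMle i j hij j hij le_rfl)]
    simp only [hM, dif_pos hij]
end

section
/- Let V_1 → ⋯ → V_n be a chain of linear maps f_i : V_i → V_{i+1} over a field K such that rank(f_{j-1}∘⋯∘f_i) = min{dim V_i, ..., dim V_j} for all i ≤ j, and let W_1 → ⋯ → W_n be another such chain with the same dimensions dim W_i = dim V_i and the same property. Then the two chains are isomorphic as representations: there exist linear isomorphisms g_i : V_i → W_i with g_{i+1} ∘ f_i = f'_i ∘ g_i for all i. -/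
/-!
Proceeding from left to right, we build isomorphisms `e i : V i ≃ W i` that carry the kernel
flag `ker (g i i) ≤ ker (g i (i + 1)) ≤ ⋯ ≤ ker (g i n)` onto the corresponding flag in `W i`;
the two flags have the same dimensions because the ranks of all composites agree. Given `e i`,
the relation `e (i + 1) ∘ f i = f' i ∘ e i` forces `e (i + 1)` on `range (f i)`. Since
`f i ⁻¹' ker (g (i + 1) j) = ker (g i j)`, this forced part is compatible with the kernel flags
at `i + 1`, and it extends to an isomorphism carrying one flag onto the other: extend across the
members of the flag one at a time, sending a complement of the part already fixed onto a
complement of the same dimension.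
-/

open Submodule Module LinearMap

section LinearAlgebra

variable {K U U' V W : Type*} [Field K] [AddCommGroup U] [Module K U] [AddCommGroup U']
  [Module K U'] [AddCommGroup V] [Module K V] [AddCommGroup W] [Module K W]

theorem finrank_ker_eq_of_finrank_range_eq [FiniteDimensional K U] [FiniteDimensional K U']
    (a : U →ₗ[K] V) (b : U' →ₗ[K] W) (hUU' : finrank K U = finrank K U')
    (hab : finrank K (range a) = finrank K (range b)) :
    finrank K (ker a) = finrank K (ker b) := by
  have := a.finrank_range_add_finrank_ker
  have := b.finrank_range_add_finrank_ker
  omega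

theorem map_eq_map_of_eqOn {p : Submodule K V} {e e₀ : V ≃ₗ[K] W} (h : Set.EqOn e e₀ p) :
    p.map e.toLinearMap = p.map e₀.toLinearMap :=
  SetLike.coe_injective <| by simpa only [map_coe, LinearEquiv.coe_coe] using h.image_eq

variable [FiniteDimensional K V] [FiniteDimensional K W]

theorem exists_linearEquiv_comp_eq_of_ker_eq (a : U →ₗ[K] V) (b : U →ₗ[K] W)
    (hab : ker a = ker b) (hVW : finrank K V = finrank K W) :
    ∃ e : V ≃ₗ[K] W, e.toLinearMap ∘ₗ a = b := by
  let φ : range a ≃ₗ[K] range b :=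
    a.quotKerEquivRange.symm ≪≫ₗ quotEquivOfEq _ _ hab ≪≫ₗ b.quotKerEquivRange
  obtain ⟨c, hc⟩ := (range a).exists_isCompl
  obtain ⟨c', hc'⟩ := (range b).exists_isCompl
  obtain ⟨ξ⟩ : Nonempty (c ≃ₗ[K] c') := by
    refine FiniteDimensional.nonempty_linearEquiv_of_finrank_eq ?_
    have := finrank_add_eq_of_isCompl hc
    have := finrank_add_eq_of_isCompl hc'
    have := φ.finrank_eq
    omega
  refine ⟨(prodEquivOfIsCompl _ _ hc).symm ≪≫ₗ φ.prodCongr ξ ≪≫ₗ prodEquivOfIsCompl _ _ hc', ?_⟩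
  ext x
  have hφ : φ ⟨a x, mem_range_self a x⟩ = ⟨b x, mem_range_self b x⟩ := by
    simp [φ, quotKerEquivRange_symm_apply_image, Subtype.ext_iff]
  have := prodEquivOfIsCompl_symm_apply_left _ _ hc (⟨a x, mem_range_self a x⟩ : range a)
  simp only [LinearMap.comp_apply, LinearEquiv.coe_coe, LinearEquiv.trans_apply]
  rw [show a x = ((⟨a x, mem_range_self a x⟩ : range a) : V) from rfl, this]
  simp [hφ]

theorem exists_linearEquiv_eqOn_map_eq (e₀ : V ≃ₗ[K] W) (P k : Submodule K V)
    (k' : Submodule K W) (hdim : finrank K k = finrank K k')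
    (hPk : (P ⊓ k).map e₀.toLinearMap = P.map e₀.toLinearMap ⊓ k') :
    ∃ e : V ≃ₗ[K] W, Set.EqOn e e₀ P ∧ k.map e.toLinearMap = k' := by
  obtain ⟨c, hsc, hk⟩ := IsModularLattice.exists_disjoint_and_sup_eq (inf_le_right : P ⊓ k ≤ k)
  obtain ⟨c', hsc', hk'⟩ :=
    IsModularLattice.exists_disjoint_and_sup_eq (inf_le_right : P.map e₀.toLinearMap ⊓ k' ≤ k')
  have hPc : Disjoint P c := by
    simpa [inf_eq_right.2 (hk ▸ le_sup_right : c ≤ k)] using disjoint_assoc.1 hsc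
  have hPc' : Disjoint (P.map e₀.toLinearMap) c' := by
    simpa [inf_eq_right.2 (hk' ▸ le_sup_right : c' ≤ k')] using disjoint_assoc.1 hsc'
  obtain ⟨ξ⟩ : Nonempty (c ≃ₗ[K] c') := by
    refine FiniteDimensional.nonempty_linearEquiv_of_finrank_eq ?_
    have h := finrank_sup_add_finrank_inf_eq (P ⊓ k) c
    have h' := finrank_sup_add_finrank_inf_eq (P.map e₀.toLinearMap ⊓ k') c'
    have he₀ := LinearEquiv.finrank_map_eq e₀ (P ⊓ k)
    rw [hk, hsc.eq_bot, finrank_bot] at h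
    rw [hk', hsc'.eq_bot, finrank_bot] at h'
    rw [hPk] at he₀
    omega
  -- `e` is `e₀` on `P` and `ξ` on `c`: both maps out of `P × c` are injective.
  let a := P.subtype.coprod c.subtype
  let b := (e₀.toLinearMap ∘ₗ P.subtype).coprod (c'.subtype ∘ₗ ξ.toLinearMap)
  have hab : ker a = ker b := by
    rw [ker_coprod_of_disjoint_range, ker_coprod_of_disjoint_range]
    · simp [ker_comp]
    · simpa [range_comp] using hPc'
    · simpa using hPc
  obtain ⟨e, he⟩ := exists_linearEquiv_comp_eq_of_ker_eq a b hab (e₀.finrank_eq)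
  have hP : Set.EqOn e e₀ P := fun x hx => by
    simpa [a, b] using LinearMap.congr_fun he (⟨x, hx⟩, 0)
  have hc : c.map e.toLinearMap = c' := by
    have : e.toLinearMap ∘ₗ c.subtype = c'.subtype ∘ₗ ξ.toLinearMap := by
      ext x; simpa [a, b] using LinearMap.congr_fun he (0, x)
    rw [← c.range_subtype, ← range_comp, this, range_comp, LinearEquiv.range, Submodule.map_top,
      range_subtype]
  have hs := map_eq_map_of_eqOn (hP.mono (inf_le_left : P ⊓ k ≤ P))
  refine ⟨e, hP, ?_⟩
  rw [← hk, ← hk', Submodule.map_sup, hs, hc, hPk]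

theorem exists_linearEquiv_eqOn_map_eq_of_monotoneOn {ι : Type*} [LinearOrder ι] (s : Finset ι)
    {k : ι → Submodule K V} {k' : ι → Submodule K W} (hk : MonotoneOn k s)
    (hk' : MonotoneOn k' s) (hdim : ∀ t ∈ s, finrank K (k t) = finrank K (k' t))
    (P : Submodule K V) (e₀ : V ≃ₗ[K] W)
    (hP : ∀ t ∈ s, (P ⊓ k t).map e₀.toLinearMap = P.map e₀.toLinearMap ⊓ k' t) :
    ∃ e : V ≃ₗ[K] W, Set.EqOn e e₀ P ∧ ∀ t ∈ s, (k t).map e.toLinearMap = k' t := by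
  induction s using Finset.induction_on_min generalizing P e₀ with
  | empty => exact ⟨e₀, Set.eqOn_refl _ _, by simp⟩
  | insert a s ha ih =>
    have has : a ∈ insert a s := Finset.mem_insert_self a s
    obtain ⟨e₁, he₁, hka⟩ := exists_linearEquiv_eqOn_map_eq e₀ P (k a) (k' a)
      (hdim a has) (hP a has)
    have hPa : ∀ t ∈ s, ((P ⊔ k a) ⊓ k t).map e₁.toLinearMap =
        (P ⊔ k a).map e₁.toLinearMap ⊓ k' t := by
      intro t ht
      have hts : t ∈ insert a s := Finset.mem_insert_of_mem ht
      have hle : k a ≤ k t := hk has hts (ha t ht).le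
      have hle' : k' a ≤ k' t := hk' has hts (ha t ht).le
      -- modular law: `(P ⊔ k a) ⊓ k t = k a ⊔ (P ⊓ k t)`, and likewise in `W`
      rw [sup_comm, sup_inf_assoc_of_le _ hle, Submodule.map_sup, Submodule.map_sup, hka,
        map_eq_map_of_eqOn (he₁.mono (inf_le_left : P ⊓ k t ≤ P)), hP t hts,
        map_eq_map_of_eqOn he₁, sup_comm, sup_inf_assoc_of_le _ hle', sup_comm]
    obtain ⟨e, he, hks⟩ := ih (hk.mono (Finset.subset_insert a s))
      (hk'.mono (Finset.subset_insert a s)) (fun t ht => hdim t (Finset.mem_insert_of_mem ht))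
      (P ⊔ k a) e₁ hPa
    refine ⟨e, fun x hx => (he (mem_sup_left hx)).trans (he₁ hx), fun t ht => ?_⟩
    rcases Finset.mem_insert.1 ht with rfl | ht
    · rw [map_eq_map_of_eqOn (he.mono (le_sup_right : k t ≤ P ⊔ k t)), hka]
    · exact hks t ht

theorem exists_linearEquiv_comp_eq_and_map_eq_of_monotoneOn
    (f : U →ₗ[K] V) (f' : U' →ₗ[K] W) (e : U ≃ₗ[K] U') (hVW : finrank K V = finrank K W)
    (hker : (ker f).map e.toLinearMap = ker f') {ι : Type*} [LinearOrder ι] (s : Finset ι)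
    {k : ι → Submodule K V} {k' : ι → Submodule K W} (hk : MonotoneOn k s)
    (hk' : MonotoneOn k' s) (hdim : ∀ t ∈ s, finrank K (k t) = finrank K (k' t))
    (hcomap : ∀ t ∈ s, ((k t).comap f).map e.toLinearMap = (k' t).comap f') :
    ∃ e' : V ≃ₗ[K] W, e'.toLinearMap ∘ₗ f = f' ∘ₗ e.toLinearMap ∧
      ∀ t ∈ s, (k t).map e'.toLinearMap = k' t := by
  obtain ⟨e₀, he₀⟩ := exists_linearEquiv_comp_eq_of_ker_eq f (f' ∘ₗ e.toLinearMap)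
    (by rw [ker_comp, ← hker, comap_map_eq_of_injective e.injective]) hVW
  have hmap (p : Submodule K U) :
      (p.map f).map e₀.toLinearMap = (p.map e.toLinearMap).map f' := by
    rw [← map_comp, he₀, map_comp]
  have hrange : (range f).map e₀.toLinearMap = range f' := by
    rw [← Submodule.map_top, hmap, Submodule.map_top, LinearEquiv.range, Submodule.map_top]
  obtain ⟨e', he', hks⟩ := exists_linearEquiv_eqOn_map_eq_of_monotoneOn s hk hk' hdim
    (range f) e₀ (fun t ht => by rw [← map_comap_eq, hmap, hcomap t ht, map_comap_eq, hrange])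
  refine ⟨e', ?_, hks⟩
  ext x
  simpa [he' (mem_range_self f x)] using LinearMap.congr_fun he₀ x

end LinearAlgebra

theorem exists_pi_forall_rel_succ {α : ℕ → Sort*} (Q : ∀ i, α i → Prop)
    (R : ∀ i, α i → α (i + 1) → Prop) (h0 : ∃ a, Q 0 a)
    (hstep : ∀ i a, Q i a → ∃ b, Q (i + 1) b ∧ R i a b) :
    ∃ x : ∀ i, α i, ∀ i, R i (x i) (x (i + 1)) := by
  choose a₀ ha₀ using h0
  choose next hnext using hstep
  let x : ∀ i, {a // Q i a} :=
    fun i => Nat.rec ⟨a₀, ha₀⟩ (fun i y => ⟨next i y.1 y.2, (hnext i y.1 y.2).1⟩) i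
  exact ⟨fun i => (x i).1, fun i => (hnext i (x i).1 (x i).2).2⟩

section Chain

variable {K : Type*} [Field K] {V W : ℕ → Type*} [∀ i, AddCommGroup (V i)] [∀ i, Module K (V i)]
  [∀ i, AddCommGroup (W i)] [∀ i, Module K (W i)]

structure IsChainComposite (f : ∀ i, V i →ₗ[K] V (i + 1)) (g : ∀ i j, V i →ₗ[K] V j) :
    Prop where
  self_eq : ∀ i, g i i = LinearMap.id
  succ_eq : ∀ i j, i ≤ j → g i (j + 1) = f j ∘ₗ g i j

namespace IsChainComposite

variable {f : ∀ i, V i →ₗ[K] V (i + 1)} {g : ∀ i j, V i →ₗ[K] V j}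
  {f' : ∀ i, W i →ₗ[K] W (i + 1)} {g' : ∀ i j, W i →ₗ[K] W j}

theorem comp_eq (hg : IsChainComposite f g) {i j : ℕ} (hij : i < j) :
    g (i + 1) j ∘ₗ f i = g i j := by
  induction j, hij using Nat.le_induction with
  | base => rw [hg.self_eq, hg.succ_eq i i le_rfl, hg.self_eq, id_comp, comp_id]
  | succ j hj ih => rw [hg.succ_eq _ j hj, hg.succ_eq i j (by omega), comp_assoc, ih]

theorem ker_succ_eq (hg : IsChainComposite f g) (i : ℕ) : ker (g i (i + 1)) = ker (f i) := by
  rw [← hg.comp_eq (Nat.lt_succ_self i), hg.self_eq, id_comp]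

theorem comap_ker (hg : IsChainComposite f g) {i j : ℕ} (hij : i < j) :
    (ker (g (i + 1) j)).comap (f i) = ker (g i j) := by
  rw [← ker_comp, hg.comp_eq hij]

theorem ker_monotoneOn (hg : IsChainComposite f g) (i n : ℕ) :
    MonotoneOn (fun j => ker (g i j)) (Finset.Icc i n) := by
  rintro t ht s - hts
  replace ht := (Finset.mem_Icc.1 ht).1
  dsimp only
  induction s, hts using Nat.le_induction with
  | base => exact le_rfl
  | succ s hs ih => rw [hg.succ_eq i s (le_trans ht hs)]; exact ih.trans (ker_le_ker_comp _ _)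

theorem exists_linearEquiv_succ (hg : IsChainComposite f g) (hg' : IsChainComposite f' g')
    {n i : ℕ} (hin : i + 1 ≤ n) [FiniteDimensional K (V (i + 1))]
    [FiniteDimensional K (W (i + 1))] (hdim : finrank K (V (i + 1)) = finrank K (W (i + 1)))
    (hkdim : ∀ j ∈ Finset.Icc (i + 1) n,
      finrank K (ker (g (i + 1) j)) = finrank K (ker (g' (i + 1) j)))
    (e : V i ≃ₗ[K] W i)
    (he : ∀ j ∈ Finset.Icc i n, (ker (g i j)).map e.toLinearMap = ker (g' i j)) :
    ∃ e' : V (i + 1) ≃ₗ[K] W (i + 1), e'.toLinearMap ∘ₗ f i = f' i ∘ₗ e.toLinearMap ∧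
      ∀ j ∈ Finset.Icc (i + 1) n,
        (ker (g (i + 1) j)).map e'.toLinearMap = ker (g' (i + 1) j) := by
  refine exists_linearEquiv_comp_eq_and_map_eq_of_monotoneOn (f i) (f' i) e hdim ?_ _
    (hg.ker_monotoneOn _ n) (hg'.ker_monotoneOn _ n) hkdim fun j hj => ?_
  · rw [← hg.ker_succ_eq, ← hg'.ker_succ_eq]
    exact he (i + 1) (Finset.mem_Icc.2 ⟨i.le_succ, hin⟩)
  · obtain ⟨hij, hjn⟩ := Finset.mem_Icc.1 hj
    rw [hg.comap_ker hij, hg'.comap_ker hij]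
    exact he j (Finset.mem_Icc.2 ⟨by omega, hjn⟩)

end IsChainComposite

end Chain

/-- Uniqueness up to isomorphism of the rank-maximizing (rigid) representation of the
equioriented type `Aₙ` quiver: two chains of linear maps `(V, f)` and `(W, f')` of the same
dimension vector, all of whose composite ranks attain `min {dim V_i, …, dim V_j}`, are
isomorphic as representations. Composites are encoded by families `g, g'` satisfying
`g i i = id` and `g i (j+1) = f j ∘ g i j`. -/
theorem chain_rank_max_unique_up_to_iso (K : Type*) [Field K] (n : ℕ)
    (V W : ℕ → Type*) [∀ i, AddCommGroup (V i)] [∀ i, Module K (V i)]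
    [∀ i, FiniteDimensional K (V i)]
    [∀ i, AddCommGroup (W i)] [∀ i, Module K (W i)] [∀ i, FiniteDimensional K (W i)]
    (f : ∀ i, V i →ₗ[K] V (i + 1)) (f' : ∀ i, W i →ₗ[K] W (i + 1))
    (g : ∀ i j, V i →ₗ[K] V j) (g' : ∀ i j, W i →ₗ[K] W j)
    (hgi : ∀ i, g i i = LinearMap.id)
    (hgs : ∀ i j, i ≤ j → g i (j + 1) = (f j).comp (g i j))
    (hgi' : ∀ i, g' i i = LinearMap.id)
    (hgs' : ∀ i j, i ≤ j → g' i (j + 1) = (f' j).comp (g' i j))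
    (hdim : ∀ i, Module.finrank K (V i) = Module.finrank K (W i))
    (hV : ∀ i j (_ : 1 ≤ i) (hij : i ≤ j) (_ : j ≤ n),
      Module.finrank K (LinearMap.range (g i j)) =
        (Finset.Icc i j).inf' (Finset.nonempty_Icc.mpr hij)
          (fun k => Module.finrank K (V k)))
    (hW : ∀ i j (_ : 1 ≤ i) (hij : i ≤ j) (_ : j ≤ n),
      Module.finrank K (LinearMap.range (g' i j)) =
        (Finset.Icc i j).inf' (Finset.nonempty_Icc.mpr hij)
          (fun k => Module.finrank K (W k))) :
    ∃ e : ∀ i, V i ≃ₗ[K] W i,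
      ∀ i, 1 ≤ i → i + 1 ≤ n →
        (e (i + 1)).toLinearMap.comp (f i) = (f' i).comp (e i).toLinearMap := by
  have hg : IsChainComposite f g := ⟨hgi, hgs⟩
  have hg' : IsChainComposite f' g' := ⟨hgi', hgs'⟩
  have hkdim : ∀ i, 1 ≤ i → ∀ j ∈ Finset.Icc i n,
      finrank K (ker (g i j)) = finrank K (ker (g' i j)) := by
    intro i hi j hj
    obtain ⟨hij, hjn⟩ := Finset.mem_Icc.1 hj
    refine finrank_ker_eq_of_finrank_range_eq _ _ (hdim i) ?_
    rw [hV i j hi hij hjn, hW i j hi hij hjn]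
    exact Finset.inf'_congr _ rfl fun k _ => hdim k
  have hiso : ∀ i, Nonempty (V i ≃ₗ[K] W i) := fun i =>
    FiniteDimensional.nonempty_linearEquiv_of_finrank_eq (hdim i)
  refine exists_pi_forall_rel_succ (α := fun i => V i ≃ₗ[K] W i)
    (fun i e => 1 ≤ i → ∀ j ∈ Finset.Icc i n, (ker (g i j)).map e.toLinearMap = ker (g' i j))
    (fun i e e' => 1 ≤ i → i + 1 ≤ n → e'.toLinearMap ∘ₗ f i = f' i ∘ₗ e.toLinearMap)
    ⟨(hiso 0).some, by omega⟩ fun i e he => ?_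
  by_cases hi : 1 ≤ i ∧ i + 1 ≤ n
  · obtain ⟨e', hcomm, hker⟩ :=
      hg.exists_linearEquiv_succ hg' hi.2 (hdim _) (hkdim (i + 1) (by omega)) e (he hi.1)
    exact ⟨e', fun _ => hker, fun _ _ => hcomm⟩
  · obtain ⟨e', -, hker⟩ := exists_linearEquiv_eqOn_map_eq_of_monotoneOn _
      (hg.ker_monotoneOn _ n) (hg'.ker_monotoneOn _ n) (hkdim (i + 1) (by omega)) ⊥
      (hiso _).some (by simp)
    exact ⟨e', fun _ => hker, fun h1 h2 => absurd ⟨h1, h2⟩ hi⟩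
end

section
/- For the equioriented A_n quiver and dimension vectors d, e ∈ ℕ^n, the Euler form is ⟨e, d⟩ = Σ_{i=1}^n e_i d_i − Σ_{i=1}^{n-1} e_i d_{i+1}. For the interval root α_{ij} (the 0/1 vector supported on {i,...,j}), the minimal hom-dimension hom(α_{i,j-1}, d) between general representations satisfies hom(α_{i,j-1}, d) = max{ d_i − d_k : i ≤ k ≤ j }, where d_{n+1} = 0. -/
/-- The "rectangular identity" linear map `K^a → K^b`, `(x₁,…,x_a) ↦ (x₁,…)`.
Between two one-dimensional spaces it is the identity; if `a = 0` or `b = 0` it is zero. -/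
noncomputable def rectMap (K : Type*) [Field K] (a b : ℕ) :
    (Fin a → K) →ₗ[K] (Fin b → K) :=
  Matrix.mulVecLin (Matrix.of fun (p : Fin b) (q : Fin a) =>
    if (p : ℕ) = (q : ℕ) then (1 : K) else 0)

/-- Dimension vector of the interval indecomposable `U_{i,j}` of a type `Aₙ` quiver:
`1` on `{i, …, j}` and `0` elsewhere. -/
def intervalDim (i j k : ℕ) : ℕ := if i ≤ k ∧ k ≤ j then 1 else 0

/-- The space of homomorphisms between two representations of the equioriented type `A`
quiver `⋯ → k → k+1 → ⋯`, given by dimension vectors `c, e` and structure maps `F, G`: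
families `φ` of linear maps commuting with the structure maps. -/
def homSpace (K : Type*) [Field K] (c e : ℕ → ℕ)
    (F : ∀ k, (Fin (c k) → K) →ₗ[K] (Fin (c (k + 1)) → K))
    (G : ∀ k, (Fin (e k) → K) →ₗ[K] (Fin (e (k + 1)) → K)) :
    Submodule K (∀ k, (Fin (c k) → K) →ₗ[K] (Fin (e k) → K)) where
  carrier := {φ | ∀ k, (G k).comp (φ k) = (φ (k + 1)).comp (F k)}
  add_mem' := by
    intro x y hx hy k
    simp only [Pi.add_apply, LinearMap.comp_add, LinearMap.add_comp, hx k, hy k]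
  zero_mem' := by
    intro k
    simp
  smul_mem' := by
    intro t x hx k
    simp only [Pi.smul_apply, LinearMap.comp_smul, LinearMap.smul_comp, hx k]

/-!
Evaluating a morphism `U_{i,j} → W` at the generator of `U_{i,j}` at vertex `i` identifies
`Hom(U_{i,j}, W)` with the kernel of the composite `W_i → W_{j+1}` of the structure maps of `W`.
That composite factors through every `W_k` with `i ≤ k ≤ j + 1`, so its rank is at most `d_k`
and the kernel has dimension at least `d_i - d_k`. Equality for the minimising `k` is attained by
the representation whose structure maps are the truncations `rectMap`: its composite restricts to
an injection on the first `d_k` coordinates.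
-/

open Module

section

variable {K : Type*} [Field K]

section rectMap

theorem rectMap_apply (a b : ℕ) (x : Fin a → K) (p : Fin b) :
    rectMap K a b x p = if h : (p : ℕ) < a then x ⟨p, h⟩ else 0 := by
  simp only [rectMap, Matrix.mulVecLin_apply, Matrix.mulVec, dotProduct, Matrix.of_apply,
    ite_mul, one_mul, zero_mul]
  split_ifs with h
  · rw [Finset.sum_eq_single ⟨p, h⟩ (fun q _ hq => if_neg fun hpq => hq (Fin.ext hpq.symm))
      (by simp)]
    simp
  · exact Finset.sum_eq_zero fun q _ => if_neg fun hpq : (p : ℕ) = q => h (hpq ▸ q.isLt)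

theorem rectMap_comp_rectMap {a b c : ℕ} (h : min a c ≤ b) :
    rectMap K b c ∘ₗ rectMap K a b = rectMap K a c := by
  ext x p
  simp only [LinearMap.comp_apply, rectMap_apply]
  split_ifs <;> first | rfl | omega

theorem rectMap_injective {a b : ℕ} (h : a ≤ b) : Function.Injective (rectMap K a b) := by
  intro x y hxy
  funext q
  simpa [rectMap_apply] using congrFun hxy ⟨q, q.isLt.trans_le h⟩

theorem rectMap_one {a b : ℕ} (h : b ≤ a) : rectMap K a b 1 = 1 := by
  ext p
  simp [rectMap_apply, p.isLt.trans_le h]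

end rectMap

section pathMap

variable {d : ℕ → ℕ} (G : ∀ k, (Fin (d k) → K) →ₗ[K] (Fin (d (k + 1)) → K))
  (i : ℕ)

/-- The composite `G (k - 1) ∘ ⋯ ∘ G i : K^{d i} → K^{d k}` along the path from `i` to `k`
(junk for `k < i`). -/
noncomputable def pathMap : ∀ k, (Fin (d i) → K) →ₗ[K] (Fin (d k) → K)
  | 0 => if h : i = 0 then h ▸ LinearMap.id else 0
  | k + 1 => if h : i = k + 1 then h ▸ LinearMap.id else G k ∘ₗ pathMap k

theorem pathMap_self : pathMap G i i = LinearMap.id := by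
  cases i <;> simp [pathMap]

theorem pathMap_succ {k : ℕ} (h : i ≤ k) :
    pathMap G i (k + 1) = G k ∘ₗ pathMap G i k := by
  rw [pathMap, dif_neg (by omega)]

theorem finrank_range_pathMap_le {k l : ℕ} (hik : i ≤ k) (hkl : k ≤ l) :
    finrank K (pathMap G i l).range ≤ d k := by
  induction l, hkl using Nat.le_induction with
  | base => simpa using Submodule.finrank_le (pathMap G i k).range
  | succ l hkl ih =>
    rw [pathMap_succ G i (hik.trans hkl), LinearMap.range_comp]
    exact (Submodule.finrank_map_le _ _).trans ih

theorem le_finrank_ker_pathMap_add {k l : ℕ} (hik : i ≤ k) (hkl : k ≤ l) :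
    d i ≤ finrank K (pathMap G i l).ker + d k := by
  have := (pathMap G i l).finrank_range_add_finrank_ker
  have := finrank_range_pathMap_le G i hik hkl
  simp only [finrank_fin_fun] at *
  omega

end pathMap

section rectRep

variable (d : ℕ → ℕ) (i : ℕ)

theorem pathMap_rectMap_comp_rectMap {μ l : ℕ} (hil : i ≤ l)
    (hμ : ∀ k ∈ Finset.Icc i l, μ ≤ d k) :
    pathMap (fun k => rectMap K (d k) (d (k + 1))) i l ∘ₗ rectMap K μ (d i) =
      rectMap K μ (d l) := by
  induction l, hil using Nat.le_induction with
  | base => rw [pathMap_self, LinearMap.id_comp]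
  | succ l hil ih =>
    rw [pathMap_succ _ _ hil, LinearMap.comp_assoc,
      ih fun k hk => hμ k (Finset.Icc_subset_Icc_right l.le_succ hk)]
    exact rectMap_comp_rectMap ((min_le_left _ _).trans (hμ l (by simp [hil])))

theorem finrank_ker_pathMap_rectMap_add_le {k l : ℕ} (hk : k ∈ Finset.Icc i l)
    (hmin : ∀ t ∈ Finset.Icc i l, d k ≤ d t) :
    finrank K (pathMap (fun k => rectMap K (d k) (d (k + 1))) i l).ker + d k ≤ d i := by
  obtain ⟨hik, hkl⟩ := Finset.mem_Icc.mp hk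
  set f := pathMap (fun k => rectMap K (d k) (d (k + 1))) i l
  have hrange : d k ≤ finrank K f.range := by
    have hinj : Function.Injective (f ∘ₗ rectMap K (d k) (d i)) := by
      rw [pathMap_rectMap_comp_rectMap d i (hik.trans hkl) hmin]
      exact rectMap_injective (hmin l (Finset.mem_Icc.mpr ⟨hik.trans hkl, le_rfl⟩))
    calc d k = finrank K (f ∘ₗ rectMap K (d k) (d i)).range := by
          rw [LinearMap.finrank_range_of_inj hinj, finrank_fin_fun]
      _ ≤ finrank K f.range := Submodule.finrank_mono (LinearMap.range_comp_le_range _ _)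
  have := f.finrank_range_add_finrank_ker
  simp only [finrank_fin_fun] at this
  omega

end rectRep

section interval

theorem intervalDim_of_mem {i j k : ℕ} (hik : i ≤ k) (hkj : k ≤ j) : intervalDim i j k = 1 :=
  if_pos ⟨hik, hkj⟩

theorem intervalDim_of_not_mem {i j k : ℕ} (hk : ¬(i ≤ k ∧ k ≤ j)) :
    intervalDim i j k = 0 :=
  if_neg hk

theorem intervalDim_le_one (i j k : ℕ) : intervalDim i j k ≤ 1 := by
  unfold intervalDim
  split_ifs <;> simp

variable {V : Type*} [AddCommGroup V] [Module K V]

theorem linearMap_ext_of_le_one {m : ℕ} (hm : m ≤ 1) {f g : (Fin m → K) →ₗ[K] V}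
    (h : f 1 = g 1) : f = g := by
  refine LinearMap.pi_ext' fun q => LinearMap.ext_ring ?_
  have : Pi.single q 1 = (1 : Fin m → K) := funext fun p => by
    rw [Subsingleton.elim p q (h := Fin.subsingleton_iff_le_one.mpr hm)]; simp
  simpa [this] using h

theorem linearMap_eq_zero_of_eq_zero {m : ℕ} (hm : m = 0) (f : (Fin m → K) →ₗ[K] V) :
    f = 0 := by
  subst hm
  ext q
  exact q.elim0

noncomputable abbrev intervalRep (K : Type*) [Field K] (i j : ℕ) :
    ∀ k, (Fin (intervalDim i j k) → K) →ₗ[K] (Fin (intervalDim i j (k + 1)) → K) :=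
  fun k => rectMap K (intervalDim i j k) (intervalDim i j (k + 1))

variable {d : ℕ → ℕ} {G : ∀ k, (Fin (d k) → K) →ₗ[K] (Fin (d (k + 1)) → K)}
  {i j : ℕ}

theorem homSpace_apply_one
    {φ : ∀ k, (Fin (intervalDim i j k) → K) →ₗ[K] (Fin (d k) → K)}
    (hφ : φ ∈ homSpace K (intervalDim i j) d (intervalRep K i j) G) {k : ℕ}
    (hik : i ≤ k) (hkj : k ≤ j) : φ k 1 = pathMap G i k (φ i 1) := by
  induction k, hik using Nat.le_induction with
  | base => rw [pathMap_self, LinearMap.id_apply]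
  | succ k hik ih =>
    have hstep := LinearMap.congr_fun (hφ k) 1
    rw [LinearMap.comp_apply, LinearMap.comp_apply,
      rectMap_one ((intervalDim_le_one _ _ _).trans (intervalDim_of_mem hik (by omega)).ge)]
      at hstep
    rw [← hstep, ih (by omega), pathMap_succ G i hik, LinearMap.comp_apply]

theorem pathMap_apply_one_eq_zero
    {φ : ∀ k, (Fin (intervalDim i j k) → K) →ₗ[K] (Fin (d k) → K)}
    (hφ : φ ∈ homSpace K (intervalDim i j) d (intervalRep K i j) G) (hij : i ≤ j) :
    pathMap G i (j + 1) (φ i 1) = 0 := by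
  rw [pathMap_succ G i hij, LinearMap.comp_apply, ← homSpace_apply_one hφ hij le_rfl,
    ← LinearMap.comp_apply, hφ j,
    linearMap_eq_zero_of_eq_zero (intervalDim_of_not_mem (by omega)) (φ (j + 1)),
    LinearMap.zero_comp, LinearMap.zero_apply]

variable (G) in
noncomputable def homSpaceEvalOne (hij : i ≤ j) :
    homSpace K (intervalDim i j) d (intervalRep K i j) G →ₗ[K] (pathMap G i (j + 1)).ker where
  toFun φ := ⟨φ.1 i 1, pathMap_apply_one_eq_zero φ.2 hij⟩
  map_add' _ _ := rfl
  map_smul' _ _ := rfl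

theorem homSpaceEvalOne_injective (hij : i ≤ j) :
    Function.Injective (homSpaceEvalOne G hij) := by
  rw [injective_iff_map_eq_zero]
  rintro ⟨φ, hφ⟩ hφ0
  have hv : φ i 1 = 0 := congrArg Subtype.val hφ0
  ext1
  funext k
  by_cases hk : i ≤ k ∧ k ≤ j
  · refine linearMap_ext_of_le_one (intervalDim_le_one i j k) ?_
    rw [homSpace_apply_one hφ hk.1 hk.2, hv, map_zero]
    rfl
  · exact linearMap_eq_zero_of_eq_zero (intervalDim_of_not_mem hk) _

theorem homSpaceEvalOne_surjective (hij : i ≤ j) :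
    Function.Surjective (homSpaceEvalOne G hij) := by
  rintro ⟨v, hv⟩
  let φ k : (Fin (intervalDim i j k) → K) →ₗ[K] (Fin (d k) → K) :=
    Fintype.linearCombination K fun _ => pathMap G i k v
  have hφ1 k : φ k 1 = intervalDim i j k • pathMap G i k v := by
    simp [φ, Fintype.linearCombination_apply]
  refine ⟨⟨φ, fun k => ?_⟩, Subtype.ext ?_⟩
  · by_cases hk : i ≤ k ∧ k ≤ j
    · refine linearMap_ext_of_le_one (intervalDim_le_one i j k) ?_
      rw [LinearMap.comp_apply, LinearMap.comp_apply,
        rectMap_one ((intervalDim_le_one _ _ _).trans (intervalDim_of_mem hk.1 hk.2).ge),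
        hφ1, hφ1, intervalDim_of_mem hk.1 hk.2, one_smul, ← LinearMap.comp_apply,
        ← pathMap_succ G i hk.1]
      rcases hk.2.lt_or_eq with hkj | rfl
      · rw [intervalDim_of_mem (by omega) hkj, one_smul]
      · rw [hv, smul_zero]
    · have hk0 := intervalDim_of_not_mem hk
      exact (linearMap_eq_zero_of_eq_zero hk0 _).trans (linearMap_eq_zero_of_eq_zero hk0 _).symm
  · change φ i 1 = v
    rw [hφ1, intervalDim_of_mem le_rfl hij, one_smul, pathMap_self, LinearMap.id_apply]

theorem finrank_homSpace_intervalRep (hij : i ≤ j) :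
    finrank K (homSpace K (intervalDim i j) d (intervalRep K i j) G) =
      finrank K (pathMap G i (j + 1)).ker :=
  (LinearEquiv.ofBijective _
    ⟨homSpaceEvalOne_injective (G := G) hij, homSpaceEvalOne_surjective hij⟩).finrank_eq

end interval

end

theorem generic_hom_interval_eq_max_general (K : Type*) [Field K] (d : ℕ → ℕ)
    (i j : ℕ) (hij : i < j) :
    IsLeast {m : ℤ | ∃ G : ∀ k, (Fin (d k) → K) →ₗ[K] (Fin (d (k + 1)) → K),
        m = Module.finrank K (homSpace K (intervalDim i (j - 1)) d
              (fun k => rectMap K (intervalDim i (j - 1) k) (intervalDim i (j - 1) (k + 1))) G)}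
      ((Finset.Icc i j).sup' (Finset.nonempty_Icc.mpr hij.le)
        (fun k => (d i : ℤ) - (d k : ℤ))) := by
  obtain ⟨j, rfl⟩ : ∃ j', j = j' + 1 := ⟨j - 1, by omega⟩
  rw [Nat.add_sub_cancel]
  have hlower G : (Finset.Icc i (j + 1)).sup' (Finset.nonempty_Icc.mpr hij.le)
      (fun k => (d i : ℤ) - d k) ≤
        finrank K (homSpace K (intervalDim i j) d (intervalRep K i j) G) := by
    refine Finset.sup'_le _ _ fun k hk => ?_
    have := le_finrank_ker_pathMap_add G i (Finset.mem_Icc.mp hk).1 (Finset.mem_Icc.mp hk).2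
    rw [finrank_homSpace_intervalRep (by omega)]
    omega
  obtain ⟨k₀, hk₀, hmin⟩ :=
    (Finset.Icc i (j + 1)).exists_min_image d (Finset.nonempty_Icc.mpr hij.le)
  refine ⟨⟨fun k => rectMap K (d k) (d (k + 1)), le_antisymm (hlower _) ?_⟩,
    fun m ⟨G, hm⟩ => hm ▸ hlower G⟩
  calc _ ≤ (d i : ℤ) - d k₀ := by
        have := finrank_ker_pathMap_rectMap_add_le (K := K) d i hk₀ hmin
        rw [finrank_homSpace_intervalRep (by omega)]
        omega
    _ ≤ _ := Finset.le_sup' (fun k => (d i : ℤ) - d k) hk₀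

/-- For the equioriented `Aₙ` quiver `1 → ⋯ → n` and a dimension vector `d` (with `d 0 = 0`
and `d k = 0` for `k > n`), the minimal value of `dim Hom_Q(U_{i,j-1}, W)` over all
representations `W` of dimension vector `d` is `max {d_i - d_k : i ≤ k ≤ j}` (with
`d_{n+1} = 0`), the minimum being attained (Schofield's formula for the generic hom). -/
theorem generic_hom_interval_eq_max (K : Type*) [Field K] (n : ℕ) (d : ℕ → ℕ)
    (h0 : d 0 = 0) (hn : ∀ k, n < k → d k = 0)
    (i j : ℕ) (h1 : 1 ≤ i) (hij : i < j) (hjn : j ≤ n + 1) :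
    IsLeast {m : ℤ | ∃ G : ∀ k, (Fin (d k) → K) →ₗ[K] (Fin (d (k + 1)) → K),
        m = Module.finrank K (homSpace K (intervalDim i (j - 1)) d
              (fun k => rectMap K (intervalDim i (j - 1) k) (intervalDim i (j - 1) (k + 1))) G)}
      ((Finset.Icc i j).sup' (Finset.nonempty_Icc.mpr hij.le)
        (fun k => (d i : ℤ) - (d k : ℤ))) :=
  generic_hom_interval_eq_max_general K d i j hij
end

section
/- Let Q be a Dynkin quiver, α a positive root, d a dimension vector, and suppose α ↠ e' where e' is the dimension vector of an injective representation I. Then there exists a nonzero dimension vector f with f ↪ α (f is the dimension vector of a subrepresentation of U_α) such that ⟨f, d⟩ ≤ ⟨d, e'⟩ for the Euler form ⟨−,−⟩. -/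
/-- A finite-dimensional representation of the finite quiver with vertex set `ι` and arrow
set `Ar` (an arrow `a` goes from `src a` to `tgt a`) over the field `K`. -/
structure QRep (K : Type) [Field K] (ι : Type) (Ar : Type) (src tgt : Ar → ι) where
  V : ι → Type
  [acg : ∀ i, AddCommGroup (V i)]
  [mod : ∀ i, Module K (V i)]
  [fd : ∀ i, FiniteDimensional K (V i)]
  maps : ∀ a, V (src a) →ₗ[K] V (tgt a)

attribute [instance] QRep.acg QRep.mod QRep.fd

variable (K : Type) [Field K] (ι : Type) [Fintype ι] (Ar : Type) [Fintype Ar]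
  (src tgt : Ar → ι)

/-- The dimension vector of a representation. -/
noncomputable def dimv (M : QRep K ι Ar src tgt) : ι → ℕ := fun i => Module.finrank K (M.V i)

/-- `φ` is a morphism of representations `M → N`. -/
def IsHom (M N : QRep K ι Ar src tgt) (φ : ∀ i, M.V i →ₗ[K] N.V i) : Prop :=
  ∀ a, (N.maps a).comp (φ (src a)) = (φ (tgt a)).comp (M.maps a)

/-- The space `Hom_Q(M, N)` of morphisms of representations. -/
def homSp (M N : QRep K ι Ar src tgt) : Submodule K (∀ i, M.V i →ₗ[K] N.V i) where
  carrier := {φ | IsHom K ι Ar src tgt M N φ}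
  add_mem' := by
    intro x y hx hy a
    simp only [Pi.add_apply, LinearMap.comp_add, LinearMap.add_comp, hx a, hy a]
  zero_mem' := by intro a; simp
  smul_mem' := by
    intro t x hx a
    simp only [Pi.smul_apply, LinearMap.comp_smul, LinearMap.smul_comp, hx a]

/-- `dim Hom_Q(M, N)`. -/
noncomputable def homDim (M N : QRep K ι Ar src tgt) : ℕ :=
  Module.finrank K (homSp K ι Ar src tgt M N)

/-- The generic (minimal) hom dimension `hom(e, d)` between representations of dimension
vectors `e` and `d`. -/
noncomputable def genHom (e d : ι → ℕ) : ℕ :=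
  sInf {h | ∃ M N : QRep K ι Ar src tgt,
    dimv K ι Ar src tgt M = e ∧ dimv K ι Ar src tgt N = d ∧ h = homDim K ι Ar src tgt M N}

/-- Direct sum of representations. -/
noncomputable def dsum (M N : QRep K ι Ar src tgt) : QRep K ι Ar src tgt :=
  QRep.mk (fun i => M.V i × N.V i) (fun a => (M.maps a).prodMap (N.maps a))

/-- `m`-fold direct power of a representation. -/
noncomputable def npow (M : QRep K ι Ar src tgt) (m : ℕ) : QRep K ι Ar src tgt :=
  QRep.mk (fun i => Fin m → M.V i) (fun a => (M.maps a).compLeft (Fin m))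

/-- The zero representation(s). -/
def TrivialRep (M : QRep K ι Ar src tgt) : Prop := ∀ i, Subsingleton (M.V i)

/-- Isomorphism of representations. -/
def IsoRep (M N : QRep K ι Ar src tgt) : Prop :=
  ∃ φ, IsHom K ι Ar src tgt M N φ ∧ ∀ i, Function.Bijective (φ i)

/-- Indecomposability. -/
def Indec (M : QRep K ι Ar src tgt) : Prop :=
  ¬TrivialRep K ι Ar src tgt M ∧
    ∀ W W', IsoRep K ι Ar src tgt M (dsum K ι Ar src tgt W W') →
      TrivialRep K ι Ar src tgt W ∨ TrivialRep K ι Ar src tgt W'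

/-- Rigidity, `Ext¹_Q(M, M) = 0`: surjectivity of the standard map
`∏ᵢ Hom(Mᵢ, Mᵢ) → ∏ₐ Hom(M_{src a}, M_{tgt a})` of the canonical projective resolution. -/
def Rigid (M : QRep K ι Ar src tgt) : Prop :=
  ∀ ψ : ∀ a, M.V (src a) →ₗ[K] M.V (tgt a), ∃ φ : ∀ i, M.V i →ₗ[K] M.V i,
    ∀ a, ψ a = (M.maps a).comp (φ (src a)) - (φ (tgt a)).comp (M.maps a)

/-- `M ≅ U^m ⊕ W` where `U` is not a direct summand of `W`: the multiplicity of `U` in the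
Krull–Remak–Schmidt decomposition of `M` is `m`. -/
noncomputable def HasMult (U M : QRep K ι Ar src tgt) (m : ℕ) : Prop :=
  ∃ W, IsoRep K ι Ar src tgt M (dsum K ι Ar src tgt (npow K ι Ar src tgt U m) W) ∧
    ¬∃ W', IsoRep K ι Ar src tgt W (dsum K ι Ar src tgt U W')

/-- The Euler form of the quiver. -/
def eulerForm (x y : ι → ℤ) : ℤ :=
  ∑ i, x i * y i - ∑ a, x (src a) * y (tgt a)

/-- The quiver is Dynkin: the Euler (Tits) quadratic form is positive definite. -/
def IsDynkin : Prop := ∀ x : ι → ℤ, x ≠ 0 → 0 < eulerForm ι Ar src tgt x x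

/-- `0 → U →f X →g T → 0` is an almost split (Auslander–Reiten) sequence: a non-split short
exact sequence with `U, T` indecomposable which is left almost split at `f` and right
almost split at `g`. -/
def AlmostSplit (U X T : QRep K ι Ar src tgt)
    (f : ∀ i, U.V i →ₗ[K] X.V i) (g : ∀ i, X.V i →ₗ[K] T.V i) : Prop :=
  IsHom K ι Ar src tgt U X f ∧ IsHom K ι Ar src tgt X T g ∧
  Indec K ι Ar src tgt U ∧ Indec K ι Ar src tgt T ∧
  (∀ i, Function.Injective (f i)) ∧ (∀ i, Function.Surjective (g i)) ∧
  (∀ i, LinearMap.range (f i) = LinearMap.ker (g i)) ∧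
  (¬∃ r, IsHom K ι Ar src tgt X U r ∧ ∀ i, (r i).comp (f i) = LinearMap.id) ∧
  (∀ (W : QRep K ι Ar src tgt) (h : ∀ i, U.V i →ₗ[K] W.V i),
    IsHom K ι Ar src tgt U W h →
    (¬∃ r, IsHom K ι Ar src tgt W U r ∧ ∀ i, (r i).comp (h i) = LinearMap.id) →
    ∃ h', IsHom K ι Ar src tgt X W h' ∧ ∀ i, (h' i).comp (f i) = h i) ∧
  (∀ (W : QRep K ι Ar src tgt) (h : ∀ i, W.V i →ₗ[K] T.V i),
    IsHom K ι Ar src tgt W T h →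
    (¬∃ s, IsHom K ι Ar src tgt T W s ∧ ∀ i, (h i).comp (s i) = LinearMap.id) →
    ∃ h', IsHom K ι Ar src tgt W X h' ∧ ∀ i, (g i).comp (h' i) = h i)

variable (K : Type) [Field K] (ι : Type) [Fintype ι] (Ar : Type) [Fintype Ar]
  (src tgt : Ar → ι)

/-- `M` has a quotient representation of dimension vector `e`. -/
def HasQuotDim (M : QRep K ι Ar src tgt) (e : ι → ℕ) : Prop :=
  ∃ (N : QRep K ι Ar src tgt) (φ : ∀ i, M.V i →ₗ[K] N.V i),
    IsHom K ι Ar src tgt M N φ ∧ (∀ i, Function.Surjective (φ i)) ∧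
      dimv K ι Ar src tgt N = e

/-- `M` has a subrepresentation of dimension vector `e`. -/
def HasSubDim (M : QRep K ι Ar src tgt) (e : ι → ℕ) : Prop :=
  ∃ (N : QRep K ι Ar src tgt) (φ : ∀ i, N.V i →ₗ[K] M.V i),
    IsHom K ι Ar src tgt N M φ ∧ (∀ i, Function.Injective (φ i)) ∧
      dimv K ι Ar src tgt N = e

/-- `d ↠ e`: every representation of dimension vector `d` has a quotient of dimension
vector `e`. -/
def Covers (d e : ι → ℕ) : Prop :=
  ∀ M : QRep K ι Ar src tgt, dimv K ι Ar src tgt M = d → HasQuotDim K ι Ar src tgt M e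

/-- `I` is an injective object in the category of representations. -/
def InjObj (I : QRep K ι Ar src tgt) : Prop :=
  ∀ (M N : QRep K ι Ar src tgt) (φ : ∀ i, M.V i →ₗ[K] N.V i)
    (ψ : ∀ i, M.V i →ₗ[K] I.V i),
    IsHom K ι Ar src tgt M N φ → (∀ i, Function.Injective (φ i)) →
    IsHom K ι Ar src tgt M I ψ →
    ∃ χ, IsHom K ι Ar src tgt N I χ ∧ ∀ i, (χ i).comp (φ i) = ψ i


/-!
Write `⟨x, y⟩ = ∑ᵢ xᵢ (yᵢ - ∑_{i → k} y_k) = ∑ᵢ (xᵢ - ∑_{k → i} x_k) yᵢ`. For an injective `I`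
the numbers `sᵢ = e'ᵢ - ∑_{i → k} e'_k` are nonnegative, since `Iᵢ → ⊕_{i → k} I_k` is onto
(extend `id_I` along `I ⊆ I ⊕ W` for a suitable twisted direct sum). Hence
`⟨d, e'⟩ = ∑ᵢ dᵢ sᵢ`, and `0 < ⟨e', e'⟩ = ∑ᵢ e'ᵢ sᵢ` gives a vertex `j` with `e'_j, s_j > 0`.
A Dynkin quiver has no oriented cycles, so `fᵢ = min (αᵢ) (sᵢ + ∑_{k → i} f_k)` is well defined
by recursion along the arrows. Every representation of dimension `α` has a subrepresentation
of dimension `f`, built by the same recursion; `f_j > 0` because `e' ≤ α`; and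
`fᵢ - ∑_{k → i} f_k ≤ sᵢ` gives `⟨f, d⟩ ≤ ⟨d, e'⟩`.
-/

open Module

section ArrowSums

variable {ι Ar} [DecidableEq ι]

def arrowRel (x y : ι) : Prop := ∃ a, src a = x ∧ tgt a = y

def inSum {M : Type} [AddCommMonoid M] (x : ι → M) (i : ι) : M :=
  ∑ a : {a // tgt a = i}, x (src a)

def outSum {M : Type} [AddCommMonoid M] (x : ι → M) (i : ι) : M :=
  ∑ a : {a // src a = i}, x (tgt a)

variable {src tgt}

omit [Fintype ι] in
lemma natCast_inSum (x : ι → ℕ) (i : ι) :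
    ((inSum src tgt x i : ℕ) : ℤ) = inSum src tgt (fun j => (x j : ℤ)) i :=
  Nat.cast_sum _ _

omit [Fintype ι] in
lemma natCast_outSum (x : ι → ℕ) (i : ι) :
    ((outSum src tgt x i : ℕ) : ℤ) = outSum src tgt (fun j => (x j : ℤ)) i :=
  Nat.cast_sum _ _

lemma eulerForm_eq_sum_mul_sub_outSum (x y : ι → ℤ) :
    eulerForm ι Ar src tgt x y = ∑ i, x i * (y i - outSum src tgt y i) := by
  have h : ∑ a, x (src a) * y (tgt a) = ∑ i, x i * outSum src tgt y i := by
    rw [← Fintype.sum_fiberwise src]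
    refine Finset.sum_congr rfl fun i _ => ?_
    rw [outSum, Finset.mul_sum]
    exact Finset.sum_congr rfl fun a _ => by rw [a.2]
  simp only [eulerForm, h, mul_sub, Finset.sum_sub_distrib]

lemma eulerForm_eq_sum_sub_inSum_mul (x y : ι → ℤ) :
    eulerForm ι Ar src tgt x y = ∑ i, (x i - inSum src tgt x i) * y i := by
  have h : ∑ a, x (src a) * y (tgt a) = ∑ i, inSum src tgt x i * y i := by
    rw [← Fintype.sum_fiberwise tgt]
    refine Finset.sum_congr rfl fun i _ => ?_
    rw [inSum, Finset.sum_mul]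
    exact Finset.sum_congr rfl fun a _ => by rw [a.2]
  simp only [eulerForm, h, sub_mul, Finset.sum_sub_distrib]

omit [Fintype ι] in
lemma exists_eq_min_add_inSum (hwf : WellFounded (arrowRel src tgt)) (α b : ι → ℕ) :
    ∃ F : ι → ℕ, ∀ i, F i = min (α i) (b i + inSum src tgt F i) :=
  ⟨hwf.fix fun i F => min (α i) (b i + ∑ a : {a // tgt a = i}, F (src a) ⟨a, rfl, a.2⟩),
    hwf.fix_eq _⟩

end ArrowSums

section Dynkin

variable {ι Ar src tgt}

lemma eulerForm_indicator [DecidableEq ι] (S : Finset ι) :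
    eulerForm ι Ar src tgt (fun v => if v ∈ S then 1 else 0) (fun v => if v ∈ S then 1 else 0) =
      S.card - (Finset.univ.filter fun a => src a ∈ S ∧ tgt a ∈ S).card := by
  simp [eulerForm, ← ite_and, and_comm]

lemma IsDynkin.exists_mem_forall_tgt_notMem (h : IsDynkin ι Ar src tgt) {S : Finset ι}
    (hS : S.Nonempty) : ∃ v ∈ S, ∀ a, src a = v → tgt a ∉ S := by
  classical
  by_contra! hout
  have hcard : S.card ≤ (Finset.univ.filter fun a => src a ∈ S ∧ tgt a ∈ S).card := by
    refine Finset.card_le_card_of_surjOn src fun v hv => ?_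
    obtain ⟨a, rfl, ha⟩ := hout v hv
    exact ⟨a, by simpa [ha] using hv, rfl⟩
  obtain ⟨x, hx⟩ := hS
  have hpos := h (fun v => if v ∈ S then 1 else 0) fun h0 => by simpa [hx] using congrFun h0 x
  rw [eulerForm_indicator] at hpos
  omega

lemma IsDynkin.wellFounded_arrowRel (h : IsDynkin ι Ar src tgt) :
    WellFounded (arrowRel src tgt) := by
  classical
  have : Std.Irrefl (Relation.TransGen (arrowRel src tgt)) := ⟨fun x hx => ?_⟩
  · exact Subrelation.wf Relation.TransGen.single (Finite.wellFounded_of_trans_of_irrefl _)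
  obtain ⟨v, hv, hvS⟩ := h.exists_mem_forall_tgt_notMem
    (S := Finset.univ.filter fun v => Relation.TransGen (arrowRel src tgt) v x) ⟨x, by simpa⟩
  simp only [Finset.mem_filter, Finset.mem_univ, true_and] at hv hvS
  obtain ⟨w, ⟨a, rfl, rfl⟩, hwx⟩ := Relation.TransGen.head'_iff.mp hv
  rcases Relation.reflTransGen_iff_eq_or_transGen.mp hwx with rfl | hwx
  · exact hvS a rfl hx
  · exact hvS a rfl hwx

end Dynkin

section Submodules

variable {K} {V : Type} [AddCommGroup V] [Module K V] [FiniteDimensional K V]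

lemma Submodule.exists_le_finrank_eq (T : Submodule K V) {k : ℕ} (hTk : finrank K T ≤ k)
    (hk : k ≤ finrank K V) : ∃ W : Submodule K V, T ≤ W ∧ finrank K W = k := by
  induction k, hTk using Nat.le_induction with
  | base => exact ⟨T, le_rfl, rfl⟩
  | succ k _ ih =>
    obtain ⟨W, hTW, hW⟩ := ih (by omega)
    obtain ⟨v, -, hv⟩ := SetLike.exists_of_lt (Submodule.lt_top_of_finrank_lt_finrank
      (hW ▸ hk : finrank K W < finrank K V))
    exact ⟨W ⊔ K ∙ v, hTW.trans le_sup_left, by rw [Submodule.finrank_sup_span_singleton hv, hW]⟩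

lemma Submodule.finrank_iSup_le_sum {σ : Type} [Fintype σ] (p : σ → Submodule K V) :
    finrank K ↥(⨆ a, p a) ≤ ∑ a, finrank K (p a) := by
  classical
  suffices ∀ s : Finset σ, finrank K ↥(s.sup p) ≤ ∑ a ∈ s, finrank K (p a) by
    rw [← Finset.sup_univ_eq_iSup]
    exact this Finset.univ
  intro s
  induction s using Finset.induction_on with
  | empty => simp
  | insert a s ha ih =>
    rw [Finset.sup_insert, Finset.sum_insert ha]
    exact (Submodule.finrank_add_le_finrank_add_finrank _ _).trans (by omega)

end Submodules

section Representations

variable {K ι Ar src tgt}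

omit [Fintype ι] [Fintype Ar] in
lemma Covers.le {α e : ι → ℕ} (h : Covers K ι Ar src tgt α e) (i : ι) : e i ≤ α i := by
  obtain ⟨N, φ, -, hφ, rfl⟩ :=
    h (QRep.mk (fun i => Fin (α i) → K) fun _ => 0) (funext fun i => finrank_fin_fun K)
  exact (LinearMap.finrank_le_finrank_of_surjective (hφ i)).trans_eq (finrank_fin_fun K)

omit [Fintype ι] [Fintype Ar] in
lemma InjObj.exists_maps_comp_eq {I : QRep K ι Ar src tgt} (hI : InjObj K ι Ar src tgt I)
    (W : Type) [AddCommGroup W] [Module K W] [FiniteDimensional K W]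
    (π : ∀ a, W →ₗ[K] I.V (tgt a)) :
    ∃ σ : ∀ i, W →ₗ[K] I.V i, ∀ a, I.maps a ∘ₗ σ (src a) = π a := by
  -- `σ` is a retraction of `I ⊆ I ⊕ W`, with `W` glued onto `I` along `π`, restricted to `W`.
  let E : QRep K ι Ar src tgt :=
    QRep.mk (fun i => I.V i × W) fun a => LinearMap.inl K _ W ∘ₗ (I.maps a).coprod (π a)
  have hinl : IsHom K ι Ar src tgt I E fun i => LinearMap.inl K (I.V i) W := by
    intro a; ext x <;> simp [E]
  obtain ⟨χ, hχ, hχinl⟩ :=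
    hI I E _ (fun _ => LinearMap.id) hinl (fun _ => LinearMap.inl_injective) fun _ => rfl
  refine ⟨fun i => χ i ∘ₗ LinearMap.inr K (I.V i) W, fun a => LinearMap.ext fun w => ?_⟩
  calc I.maps a (χ (src a) (0, w)) = χ (tgt a) (π a w, 0) := by
        simpa [E] using LinearMap.congr_fun (hχ a) (0, w)
    _ = π a w := LinearMap.congr_fun (hχinl (tgt a)) (π a w)

omit [Fintype ι] in
lemma InjObj.outSum_dimv_le [DecidableEq ι] {I : QRep K ι Ar src tgt}
    (hI : InjObj K ι Ar src tgt I) (i : ι) :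
    outSum src tgt (dimv K ι Ar src tgt I) i ≤ dimv K ι Ar src tgt I i := by
  let W := ∀ a : {a // src a = i}, I.V (tgt a)
  obtain ⟨σ, hσ⟩ := hI.exists_maps_comp_eq W fun a =>
    if h : src a = i then LinearMap.proj (φ := fun a : {a // src a = i} => I.V (tgt a)) ⟨a, h⟩
    else 0
  have hinj : Function.Injective (σ i) := by
    refine (injective_iff_map_eq_zero _).2 fun w hw => funext fun ⟨a, ha⟩ => ?_
    subst ha
    have h := (LinearMap.congr_fun (hσ a) w).symm
    simp only [LinearMap.comp_apply, hw, map_zero, dif_pos] at h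
    exact h
  calc outSum src tgt (dimv K ι Ar src tgt I) i = finrank K W := by
        simp [outSum, dimv, W, finrank_pi_fintype]
    _ ≤ _ := LinearMap.finrank_le_finrank_of_injective hinj

lemma InjObj.exists_outSum_lt [DecidableEq ι] {I : QRep K ι Ar src tgt}
    (hI : InjObj K ι Ar src tgt I) (hdynkin : IsDynkin ι Ar src tgt)
    (hI0 : dimv K ι Ar src tgt I ≠ 0) :
    ∃ j, 0 < dimv K ι Ar src tgt I j ∧
      outSum src tgt (dimv K ι Ar src tgt I) j < dimv K ι Ar src tgt I j := by
  set e := dimv K ι Ar src tgt I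
  by_contra! h
  have hterm : ∀ j, (e j : ℤ) * (e j - outSum src tgt (fun i => (e i : ℤ)) j) = 0 := by
    intro j
    rw [← natCast_outSum]
    rcases (e j).eq_zero_or_pos with h0 | hpos
    · simp [h0]
    · have heq : outSum src tgt e j = e j := le_antisymm (hI.outSum_dimv_le j) (h j hpos)
      simp [heq]
  have htits := hdynkin (fun i => (e i : ℤ)) fun h0 => hI0 (funext fun i => by
    simpa using congrFun h0 i)
  simp [eulerForm_eq_sum_mul_sub_outSum, hterm] at htits

omit [Fintype ι] [Fintype Ar] in
lemma hasSubDim_of_map_le (M : QRep K ι Ar src tgt) (W : ∀ i, Submodule K (M.V i))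
    (hW : ∀ a, (W (src a)).map (M.maps a) ≤ W (tgt a)) :
    HasSubDim K ι Ar src tgt M fun i => finrank K (W i) :=
  ⟨QRep.mk (fun i => W i) fun a =>
      (M.maps a).restrict fun _ hx => hW a (Submodule.mem_map_of_mem hx),
    fun i => (W i).subtype, fun _ => rfl, fun _ => Subtype.val_injective, rfl⟩

end Representations

section Subrepresentations

variable {K ι Ar src tgt} [DecidableEq ι]

omit [Fintype ι] in
/-- `W i` is chosen, by recursion along the arrows, as any `f i`-dimensional subspace containing
the images of the `W (src a)` under the arrows `a` into `i`; these images span at most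
`min (dim M i) (inSum f i) ≤ f i` dimensions. -/
lemma exists_submodules_map_le (hwf : WellFounded (arrowRel src tgt))
    (M : QRep K ι Ar src tgt) (f : ι → ℕ) (hfM : ∀ i, f i ≤ finrank K (M.V i))
    (hf : ∀ i, min (finrank K (M.V i)) (inSum src tgt f i) ≤ f i) :
    ∃ W : ∀ i, Submodule K (M.V i),
      (∀ i, finrank K (W i) = f i) ∧ ∀ a, (W (src a)).map (M.maps a) ≤ W (tgt a) := by
  let Sub := fun i => {S : Submodule K (M.V i) // finrank K S = f i}
  let T : ∀ i, (∀ y, arrowRel src tgt y i → Sub y) → Submodule K (M.V i) := fun i W =>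
    ⨆ a : {a // tgt a = i}, a.2 ▸ (W (src a) ⟨a, rfl, a.2⟩).1.map (M.maps a)
  have hT : ∀ i W, finrank K (T i W) ≤ f i := by
    intro i W
    refine le_trans (le_min (Submodule.finrank_le _) ?_) (hf i)
    refine (Submodule.finrank_iSup_le_sum _).trans (Finset.sum_le_sum fun a _ => ?_)
    obtain ⟨a, rfl⟩ := a
    exact (Submodule.finrank_map_le _ _).trans (W (src a) _).2.le
  have hext i W := (T i W).exists_le_finrank_eq (hT i W) (hfM i)
  let extend : ∀ i, (∀ y, arrowRel src tgt y i → Sub y) → Sub i :=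
    fun i W => ⟨(hext i W).choose, (hext i W).choose_spec.2⟩
  obtain ⟨W, hW⟩ : ∃ W : ∀ i, Sub i, ∀ i, W i = extend i fun y _ => W y :=
    ⟨_, hwf.fix_eq extend⟩
  refine ⟨fun i => (W i).1, fun i => (W i).2, fun a => ?_⟩
  calc (W (src a)).1.map (M.maps a) ≤ T (tgt a) fun y _ => W y :=
        le_iSup (fun b : {b // tgt b = tgt a} => b.2 ▸ (W (src b)).1.map (M.maps b)) ⟨a, rfl⟩
    _ ≤ (W (tgt a)).1 := by
        rw [hW (tgt a)]
        exact (hext (tgt a) fun y _ => W y).choose_spec.1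

omit [Fintype ι] in
lemma hasSubDim_of_min_inSum_le (hwf : WellFounded (arrowRel src tgt)) {α f : ι → ℕ}
    (hfα : ∀ i, f i ≤ α i) (hf : ∀ i, min (α i) (inSum src tgt f i) ≤ f i)
    (M : QRep K ι Ar src tgt) (hM : dimv K ι Ar src tgt M = α) :
    HasSubDim K ι Ar src tgt M f := by
  subst hM
  obtain ⟨W, hWf, hW⟩ := exists_submodules_map_le hwf M f hfα hf
  simpa only [hWf] using hasSubDim_of_map_le M W hW

end Subrepresentations

theorem injective_quot_redundant (hdynkin : IsDynkin ι Ar src tgt)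
    (α : ι → ℕ)
    (I : QRep K ι Ar src tgt) (hI : InjObj K ι Ar src tgt I)
    (e' : ι → ℕ) (hdI : dimv K ι Ar src tgt I = e') (he' : e' ≠ 0)
    (hcov : Covers K ι Ar src tgt α e')
    (d : ι → ℕ) :
    ∃ f : ι → ℕ, f ≠ 0 ∧
      (∀ M : QRep K ι Ar src tgt, dimv K ι Ar src tgt M = α →
        HasSubDim K ι Ar src tgt M f) ∧
      eulerForm ι Ar src tgt (fun i => (f i : ℤ)) (fun i => (d i : ℤ)) ≤
        eulerForm ι Ar src tgt (fun i => (d i : ℤ)) (fun i => (e' i : ℤ)) := by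
  classical
  obtain ⟨j, hej, hj⟩ := hI.exists_outSum_lt hdynkin (hdI ▸ he')
  have houtSum_le := hI.outSum_dimv_le
  rw [hdI] at hej hj houtSum_le
  have hwf := hdynkin.wellFounded_arrowRel
  obtain ⟨F, hF⟩ := exists_eq_min_add_inSum hwf α fun i => e' i - outSum src tgt e' i
  refine ⟨F, fun hF0 => ?_, fun M hM => hasSubDim_of_min_inSum_le hwf
    (fun i => (hF i).trans_le (min_le_left _ _))
    (fun i => (min_le_min_left _ (Nat.le_add_left _ _)).trans (hF i).ge) M hM, ?_⟩
  · have hFj := hF j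
    have hej_le := hcov.le j
    rw [hF0] at hFj
    simp only [Pi.zero_apply] at hFj
    omega
  rw [eulerForm_eq_sum_sub_inSum_mul, eulerForm_eq_sum_mul_sub_outSum]
  refine Finset.sum_le_sum fun i _ => ?_
  rw [mul_comm (d i : ℤ)]
  refine mul_le_mul_of_nonneg_right ?_ (Nat.cast_nonneg _)
  have hFi := (hF i).trans_le (min_le_right _ _)
  have hei := houtSum_le i
  rw [← natCast_inSum, ← natCast_outSum]
  omega
end

section
/- Let d_1,...,d_n be nonnegative integers with a distinguished index s (1 ≤ s ≤ n), and set d_0 = d_{n+1} = 0. For 1 ≤ i ≤ j ≤ n with i < s < j define m_{ij} = [min{d_k + d_{k'} − d_s, d_s − d_{i-1} − d_{j+1}, d_{k'} − d_{j+1}, d_k − d_{i-1} : i ≤ k ≤ s ≤ k' ≤ j}]_+. Then summing the appropriate multiplicities m_{ij} of all intervals [i,j] containing a fixed vertex l (using the four-case formula for unique-sink orientation) recovers d_l. -/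
/-- Minimum of `d` over `[a,b]`. -/
noncomputable def iMin (d : ℕ → ℤ) (a b : ℕ) : ℤ := sInf (d '' Set.Icc a b)

lemma iMin_isLeast (d : ℕ → ℤ) {a b : ℕ} (h : a ≤ b) :
    IsLeast (d '' Set.Icc a b) (iMin d a b) := by
  have hfin : (d '' Set.Icc a b).Finite := (Set.finite_Icc a b).image d
  have hne : (d '' Set.Icc a b).Nonempty := ⟨d a, a, by simp [h]⟩
  exact ⟨hne.csInf_mem hfin, fun x hx => csInf_le hfin.bddBelow hx⟩

lemma iMin_le (d : ℕ → ℤ) {a b k : ℕ} (h1 : a ≤ k) (h2 : k ≤ b) :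
    iMin d a b ≤ d k :=
  (iMin_isLeast d (h1.trans h2)).2 ⟨k, ⟨h1, h2⟩, rfl⟩

lemma iMin_exists (d : ℕ → ℤ) {a b : ℕ} (h : a ≤ b) :
    ∃ k, a ≤ k ∧ k ≤ b ∧ d k = iMin d a b := by
  obtain ⟨k, hk, he⟩ := (iMin_isLeast d h).1
  exact ⟨k, hk.1, hk.2, he⟩

lemma iMin_nonneg (d : ℕ → ℤ) (hpos : ∀ i, 0 ≤ d i) {a b : ℕ} (h : a ≤ b) :
    0 ≤ iMin d a b := by
  obtain ⟨k, _, _, hk⟩ := iMin_exists d h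
  exact hk ▸ hpos k

lemma iMin_self (d : ℕ → ℤ) (a : ℕ) : iMin d a a = d a := by
  simp [iMin]

lemma iMin_left (d : ℕ → ℤ) (a b : ℕ) (h1 : 1 ≤ a) (h : a ≤ b) :
    iMin d (a - 1) b = min (d (a - 1)) (iMin d a b) := by
  have hset : Set.Icc (a - 1) b = insert (a - 1) (Set.Icc a b) := by
    ext x; simp only [Set.mem_Icc, Set.mem_insert_iff]; omega
  have hfin : (d '' Set.Icc a b).Finite := (Set.finite_Icc a b).image d
  have hne : (d '' Set.Icc a b).Nonempty := ⟨d a, a, by simp [h]⟩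
  rw [iMin, hset, Set.image_insert_eq, csInf_insert hfin.bddBelow hne]
  rfl

lemma iMin_right (d : ℕ → ℤ) (a b : ℕ) (h : a ≤ b) :
    iMin d a (b + 1) = min (iMin d a b) (d (b + 1)) := by
  have hset : Set.Icc a (b + 1) = insert (b + 1) (Set.Icc a b) := by
    ext x; simp only [Set.mem_Icc, Set.mem_insert_iff]; omega
  have hfin : (d '' Set.Icc a b).Finite := (Set.finite_Icc a b).image d
  have hne : (d '' Set.Icc a b).Nonempty := ⟨d a, a, by simp [h]⟩
  rw [iMin, hset, Set.image_insert_eq, csInf_insert hfin.bddBelow hne, min_comm]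
  rfl

noncomputable def sinkMult (s : ℕ) (d : ℕ → ℤ) (i j : ℕ) : ℤ :=
  if i ≤ s ∧ s ≤ j then
    max (sInf {x : ℤ | ∃ k k', i ≤ k ∧ k ≤ s ∧ s ≤ k' ∧ k' ≤ j ∧
      x = min (d k + d k' - d s) (min (d s - d (i - 1) - d (j + 1))
            (min (d k' - d (j + 1)) (d k - d (i - 1))))}) 0
  else
    max (sInf {x : ℤ | ∃ k, i ≤ k ∧ k ≤ j ∧
      x = min (d k - d (j + 1)) (d k - d (i - 1))}) 0

lemma sinkMult_cross (s : ℕ) (d : ℕ → ℤ) {i j : ℕ} (hi : i ≤ s) (hj : s ≤ j) :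
    sinkMult s d i j =
      max (min (iMin d i s + iMin d s j - d s)
        (min (d s - d (i - 1) - d (j + 1))
          (min (iMin d s j - d (j + 1)) (iMin d i s - d (i - 1))))) 0 := by
  unfold sinkMult
  rw [if_pos ⟨hi, hj⟩]
  congr 1
  obtain ⟨k0, hk1, hk2, hk3⟩ := iMin_exists d hi
  obtain ⟨k0', hk1', hk2', hk3'⟩ := iMin_exists d hj
  apply IsLeast.csInf_eq
  constructor
  · exact ⟨k0, k0', hk1, hk2, hk1', hk2', by rw [hk3, hk3']⟩
  · rintro x ⟨k, k', h1, h2, h3, h4, rfl⟩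
    have hA : iMin d i s ≤ d k := iMin_le d h1 h2
    have hB : iMin d s j ≤ d k' := iMin_le d h3 h4
    omega

lemma sinkMult_noncross (s : ℕ) (d : ℕ → ℤ) {i j : ℕ} (hij : i ≤ j)
    (h : ¬(i ≤ s ∧ s ≤ j)) :
    sinkMult s d i j = max (min (iMin d i j - d (j + 1)) (iMin d i j - d (i - 1))) 0 := by
  unfold sinkMult
  rw [if_neg h]
  congr 1
  obtain ⟨k0, hk1, hk2, hk3⟩ := iMin_exists d hij
  apply IsLeast.csInf_eq
  constructor
  · exact ⟨k0, hk1, hk2, by rw [hk3]⟩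
  · rintro x ⟨k, h1, h2, rfl⟩
    have := iMin_le d h1 h2
    omega

/-- Rank function: `∑_{i ≤ a, j ≥ b} m_{ij}`, in closed form. -/
noncomputable def rk (s : ℕ) (d : ℕ → ℤ) (a b : ℕ) : ℤ :=
  if a ≤ s ∧ s ≤ b then max (iMin d a s + iMin d s b - d s) 0 else iMin d a b

lemma rk_cross (s : ℕ) (d : ℕ → ℤ) (a b : ℕ) (ha : a ≤ s) (hb : s ≤ b) :
    rk s d a b = max (iMin d a s + iMin d s b - d s) 0 := by
  unfold rk; rw [if_pos ⟨ha, hb⟩]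

lemma rk_eq_iMin_low (s : ℕ) (d : ℕ → ℤ) (hpos : ∀ i, 0 ≤ d i) (a b : ℕ)
    (hab : a ≤ b) (hb : b ≤ s) : rk s d a b = iMin d a b := by
  unfold rk
  by_cases h : s ≤ b
  · have hbs : b = s := by omega
    rw [if_pos ⟨by omega, h⟩, hbs, iMin_self]
    have := iMin_nonneg d hpos (show a ≤ s by omega)
    omega
  · rw [if_neg fun hc => h hc.2]

lemma rk_eq_iMin_high (s : ℕ) (d : ℕ → ℤ) (hpos : ∀ i, 0 ≤ d i) (a b : ℕ)
    (hab : a ≤ b) (ha : s ≤ a) : rk s d a b = iMin d a b := by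
  unfold rk
  by_cases h : a ≤ s
  · have has : a = s := by omega
    rw [if_pos ⟨h, by omega⟩, has, iMin_self]
    have := iMin_nonneg d hpos (show s ≤ b by omega)
    omega
  · rw [if_neg fun hc => h hc.1]

lemma sinkMult_eq_diff (s : ℕ) (d : ℕ → ℤ) (hpos : ∀ i, 0 ≤ d i) {a b : ℕ}
    (ha : 1 ≤ a) (hab : a ≤ b) :
    sinkMult s d a b
      = rk s d a b - rk s d (a - 1) b - rk s d a (b + 1) + rk s d (a - 1) (b + 1) := by
  by_cases h1 : a ≤ s ∧ s ≤ b
  · obtain ⟨has, hsb⟩ := h1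
    rw [sinkMult_cross s d has hsb,
        rk_cross s d a b has hsb,
        rk_cross s d (a - 1) b (by omega) hsb,
        rk_cross s d a (b + 1) has (by omega),
        rk_cross s d (a - 1) (b + 1) (by omega) (by omega),
        iMin_left d a s ha has, iMin_right d s b hsb]
    omega
  · by_cases has : a ≤ s
    · have hbs : b < s := by omega
      rw [sinkMult_noncross s d hab h1,
          rk_eq_iMin_low s d hpos a b hab (by omega),
          rk_eq_iMin_low s d hpos (a - 1) b (by omega) (by omega),
          rk_eq_iMin_low s d hpos a (b + 1) (by omega) (by omega),
          rk_eq_iMin_low s d hpos (a - 1) (b + 1) (by omega) (by omega),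
          iMin_left d a b ha hab, iMin_left d a (b + 1) ha (by omega),
          iMin_right d a b hab]
      omega
    · rw [sinkMult_noncross s d hab h1,
          rk_eq_iMin_high s d hpos a b hab (by omega),
          rk_eq_iMin_high s d hpos (a - 1) b (by omega) (by omega),
          rk_eq_iMin_high s d hpos a (b + 1) (by omega) (by omega),
          rk_eq_iMin_high s d hpos (a - 1) (b + 1) (by omega) (by omega),
          iMin_left d a b ha hab, iMin_left d a (b + 1) ha (by omega),
          iMin_right d a b hab]
      omega

lemma rk_zero (s : ℕ) (d : ℕ → ℤ) (hpos : ∀ i, 0 ≤ d i) (h0 : d 0 = 0) (b : ℕ) :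
    rk s d 0 b = 0 := by
  unfold rk
  split_ifs with h
  · have h1 : iMin d 0 s ≤ d 0 := iMin_le d (le_refl 0) (Nat.zero_le s)
    have h2 : 0 ≤ iMin d 0 s := iMin_nonneg d hpos (Nat.zero_le s)
    have h3 : iMin d s b ≤ d s := iMin_le d (le_refl s) h.2
    omega
  · have h1 : iMin d 0 b ≤ d 0 := iMin_le d (le_refl 0) (Nat.zero_le b)
    have h2 : 0 ≤ iMin d 0 b := iMin_nonneg d hpos (Nat.zero_le b)
    omega

lemma rk_top (n s : ℕ) (d : ℕ → ℤ) (hpos : ∀ i, 0 ≤ d i) (hn : d (n + 1) = 0)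
    (hsn : s ≤ n) (a : ℕ) (ha : a ≤ n + 1) : rk s d a (n + 1) = 0 := by
  unfold rk
  split_ifs with h
  · have h1 : iMin d a s ≤ d s := iMin_le d h.1 (le_refl s)
    have h2 : iMin d s (n + 1) ≤ d (n + 1) := iMin_le d (by omega) (le_refl (n + 1))
    omega
  · have h1 : iMin d a (n + 1) ≤ d (n + 1) := iMin_le d ha (le_refl (n + 1))
    have h2 : 0 ≤ iMin d a (n + 1) := iMin_nonneg d hpos ha
    omega

lemma rk_diag (s : ℕ) (d : ℕ → ℤ) (hpos : ∀ i, 0 ≤ d i) (l : ℕ) :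
    rk s d l l = d l := by
  unfold rk
  split_ifs with h
  · have hls : l = s := by omega
    subst hls
    rw [iMin_self]
    have := hpos l
    omega
  · exact iMin_self d l

lemma tele1 (g : ℕ → ℤ) {l n : ℕ} (h : l ≤ n) :
    ∑ j ∈ Finset.Icc l n, (g j - g (j + 1)) = g l - g (n + 1) := by
  induction n, h using Nat.le_induction with
  | base => simp
  | succ n hn ih =>
    rw [Finset.sum_Icc_succ_top (by omega), ih]
    ring

lemma tele2 (F : ℕ → ℤ) {l : ℕ} (h : 1 ≤ l) :
    ∑ i ∈ Finset.Icc 1 l, (F i - F (i - 1)) = F l - F 0 := by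
  induction l, h using Nat.le_induction with
  | base => simp
  | succ l hl ih =>
    rw [Finset.sum_Icc_succ_top (by omega), ih]
    simp only [Nat.add_sub_cancel]
    ring

/-- Dimension-vector consistency of the piecewise-linear multiplicity formula for the type
`Aₙ` quiver with unique sink `s`: summing the multiplicities `m_{ij}` of all intervals
`[i,j] ⊆ [1,n]` containing a fixed vertex `l` recovers `d_l`. -/
theorem sink_sum_multiplicities_eq_dim (n s : ℕ) (hs1 : 1 ≤ s) (hsn : s ≤ n)
    (d : ℕ → ℤ) (hpos : ∀ i, 0 ≤ d i) (h0 : d 0 = 0) (hn : d (n + 1) = 0)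
    (l : ℕ) (hl1 : 1 ≤ l) (hln : l ≤ n) :
    ∑ p ∈ Finset.Icc 1 l ×ˢ Finset.Icc l n, sinkMult s d p.1 p.2 = d l := by
  rw [Finset.sum_product]
  have hstep : ∀ i ∈ Finset.Icc 1 l, ∑ j ∈ Finset.Icc l n, sinkMult s d i j
      = (rk s d i l - rk s d (i - 1) l) - (rk s d i (n + 1) - rk s d (i - 1) (n + 1)) := by
    intro i hi
    simp only [Finset.mem_Icc] at hi
    have inner : ∑ j ∈ Finset.Icc l n, sinkMult s d i j
        = ∑ j ∈ Finset.Icc l n,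
            ((rk s d i j - rk s d (i - 1) j) - (rk s d i (j + 1) - rk s d (i - 1) (j + 1))) := by
      apply Finset.sum_congr rfl
      intro j hj
      simp only [Finset.mem_Icc] at hj
      rw [sinkMult_eq_diff s d hpos (by omega) (by omega)]
      ring
    rw [inner]
    exact tele1 (fun j => rk s d i j - rk s d (i - 1) j) hln
  rw [Finset.sum_congr rfl hstep]
  have h2 : ∑ i ∈ Finset.Icc 1 l,
      ((rk s d i l - rk s d (i - 1) l) - (rk s d i (n + 1) - rk s d (i - 1) (n + 1)))
      = ∑ i ∈ Finset.Icc 1 l,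
          ((fun i => rk s d i l - rk s d i (n + 1)) i
            - (fun i => rk s d i l - rk s d i (n + 1)) (i - 1)) := by
    apply Finset.sum_congr rfl
    intro i _
    simp only
    ring
  rw [h2, tele2 (fun i => rk s d i l - rk s d i (n + 1)) hl1]
  rw [rk_diag s d hpos l, rk_top n s d hpos hn hsn l (by omega),
      rk_zero s d hpos h0 l, rk_zero s d hpos h0 (n + 1)]
  ring
end
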